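/- Under the pairwise Cox-type hazard model with all treatments set to zero (x = 0), fix distinct individuals i ≠ j, covariates l, an infection history h_{(i,j)} for the individuals other than i and j, and times 0 < t'_j < t''_j < t. Let h'_j, h''_j, and h_j be the histories in which j is infected at time t'_j, infected at time t''_j, and uninfected through time t, respectively. If ∫₀^{t − t''_j} γ(u) du ≠ 0, then [∫₀ᵗ (λ_i(u | 0, h'_j, h_{(i,j)}, l) − λ_i(u | 0, h_j, h_{(i,j)}, l)) du] / [∫₀ᵗ (λ_i(u | 0, h''_j, h_{(i,j)}, l) − λ_i(u | 0, h_j, h_{(i,j)}, l)) du] = (∫₀^{t − t'_j} γ(u) du) / (∫₀^{t − t''_j} γ(u) du). In particular, if γ(s) > 0 for all s > 0, this controlled contagion cumulative hazard ratio exceeds 1, so earlier exposure to infection increases cumulative infection risk. -/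

import Mathlib

/-!
Only the term of the hazard sum belonging to `j` depends on `j`'s infection time, so the
hazard increment caused by infecting `j` at time `s` is the constant
`exp(β₁ x_i + θ₁ l_i) · exp(β₂ x_j + θ₂ l_j)` times the delayed kernel `u ↦ 1{u > s} γ(u - s)`.
Integrating over `[0, t]` gives that constant times `∫₀^{t-s} γ`, and the constant cancels in
the ratio. When `γ > 0` on `(0, ∞)`, the map `c ↦ ∫₀^c γ` is strictly increasing, so the
ratio exceeds one.
-/

open MeasureTheory ENNReal

/-- Pairwise Cox-type infection hazard for individual `i` at time `t`:
`λ_i(t | x, h, l) = exp(β₁ x_i + θ₁ l_i) ·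
  (α(t) + Σ_{j≠i} 1{t > t_j} γ(t - t_j) exp(β₂ x_j + θ₂ l_j))`,
where the infection history assigns infection time `τ j ∈ (0,∞]` to individual `j`. -/
noncomputable def clusterHazard (n : ℕ) (β₁ β₂ θ₁ θ₂ : ℝ) (α γ : ℝ → ℝ)
    (x l : Fin n → ℝ) (τ : Fin n → ℝ≥0∞) (i : Fin n) (t : ℝ) : ℝ :=
  Real.exp (β₁ * x i + θ₁ * l i) *
    (α t + ∑ j ∈ Finset.univ.erase i,
      if τ j < ENNReal.ofReal t then γ (t - (τ j).toReal) * Real.exp (β₂ * x j + θ₂ * l j)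
      else 0)

open Set

section Increment

variable {n : ℕ} (β₁ β₂ θ₁ θ₂ : ℝ) (α γ : ℝ → ℝ) (x l : Fin n → ℝ) (τ : Fin n → ℝ≥0∞)
  {i j : Fin n}

theorem clusterHazard_update_sub_update_top (hij : i ≠ j) {s : ℝ} (hs : 0 ≤ s) (u : ℝ) :
    clusterHazard n β₁ β₂ θ₁ θ₂ α γ x l (Function.update τ j (ENNReal.ofReal s)) i u
      - clusterHazard n β₁ β₂ θ₁ θ₂ α γ x l (Function.update τ j ⊤) i u
    = Real.exp (β₁ * x i + θ₁ * l i) * Real.exp (β₂ * x j + θ₂ * l j) *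
        (Ioi s).indicator (fun u => γ (u - s)) u := by
  have hj : j ∈ Finset.univ.erase i := Finset.mem_erase.2 ⟨hij.symm, Finset.mem_univ j⟩
  unfold clusterHazard
  rw [← mul_sub, add_sub_add_left_eq_sub, ← Finset.sum_sub_distrib,
    Finset.sum_eq_single_of_mem j hj fun k _ hkj => by
      simp only [Function.update_of_ne hkj, sub_self]]
  simp only [Function.update_self, not_top_lt, if_false, sub_zero,
    ENNReal.ofReal_lt_ofReal_iff_of_nonneg hs, ENNReal.toReal_ofReal hs, indicator_apply,
    mem_Ioi]
  split_ifs <;> ring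

theorem intervalIntegral_indicator_Ioi_comp_sub {E : Type*} [NormedAddCommGroup E]
    [NormedSpace ℝ E] (f : ℝ → E) {s t : ℝ} (hs : 0 ≤ s) (hst : s ≤ t) :
    ∫ u in (0:ℝ)..t, (Ioi s).indicator (fun u => f (u - s)) u = ∫ u in (0:ℝ)..(t - s), f u := by
  rw [intervalIntegral.integral_of_le (hs.trans hst), integral_indicator measurableSet_Ioi,
    Measure.restrict_restrict measurableSet_Ioi, inter_comm, Ioc_inter_Ioi, max_eq_right hs,
    ← intervalIntegral.integral_of_le hst, intervalIntegral.integral_comp_sub_right, sub_self]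

theorem integral_clusterHazard_update_sub_update_top (hij : i ≠ j) {s t : ℝ} (hs : 0 ≤ s)
    (hst : s ≤ t) :
    ∫ u in (0:ℝ)..t,
        (clusterHazard n β₁ β₂ θ₁ θ₂ α γ x l (Function.update τ j (ENNReal.ofReal s)) i u
          - clusterHazard n β₁ β₂ θ₁ θ₂ α γ x l (Function.update τ j ⊤) i u)
    = Real.exp (β₁ * x i + θ₁ * l i) * Real.exp (β₂ * x j + θ₂ * l j) *
        ∫ u in (0:ℝ)..(t - s), γ u := by
  simp_rw [clusterHazard_update_sub_update_top β₁ β₂ θ₁ θ₂ α γ x l τ hij hs,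
    intervalIntegral.integral_const_mul, intervalIntegral_indicator_Ioi_comp_sub γ hs hst]

end Increment

theorem intervalIntegral_lt_intervalIntegral_of_pos_on {f : ℝ → ℝ} {a b c : ℝ}
    (hab : IntervalIntegrable f volume a b) (hac : IntervalIntegrable f volume a c)
    (hpos : ∀ x ∈ Ioo b c, 0 < f x) (hbc : b < c) :
    ∫ x in a..b, f x < ∫ x in a..c, f x := by
  have hsplit := intervalIntegral.integral_interval_sub_left hac hab
  have hmid := intervalIntegral.intervalIntegral_pos_of_pos_on (hab.symm.trans hac) hpos hbc
  linarith

theorem controlled_contagion_cumulative_hazard_ratio_general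
    (n : ℕ) (β₁ β₂ θ₁ θ₂ : ℝ) (α γ : ℝ → ℝ)
    (hγ_int : ∀ c : ℝ, 0 ≤ c → IntervalIntegrable γ volume 0 c)
    (l : Fin n → ℝ) (τ : Fin n → ℝ≥0∞)
    (i j : Fin n) (hij : i ≠ j)
    (t t'j t''j : ℝ) (ht'j_pos : 0 < t'j) (h'lt'' : t'j < t''j) (h''lt : t''j < t) :
    (∫ u in (0:ℝ)..t,
        (clusterHazard n β₁ β₂ θ₁ θ₂ α γ (fun _ => 0) l
            (Function.update τ j (ENNReal.ofReal t'j)) i u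
          - clusterHazard n β₁ β₂ θ₁ θ₂ α γ (fun _ => 0) l
            (Function.update τ j ⊤) i u)) /
    (∫ u in (0:ℝ)..t,
        (clusterHazard n β₁ β₂ θ₁ θ₂ α γ (fun _ => 0) l
            (Function.update τ j (ENNReal.ofReal t''j)) i u
          - clusterHazard n β₁ β₂ θ₁ θ₂ α γ (fun _ => 0) l
            (Function.update τ j ⊤) i u))
      = (∫ u in (0:ℝ)..(t - t'j), γ u) / (∫ u in (0:ℝ)..(t - t''j), γ u) ∧
    ((∀ s : ℝ, 0 < s → 0 < γ s) →
      1 < (∫ u in (0:ℝ)..t,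
        (clusterHazard n β₁ β₂ θ₁ θ₂ α γ (fun _ => 0) l
            (Function.update τ j (ENNReal.ofReal t'j)) i u
          - clusterHazard n β₁ β₂ θ₁ θ₂ α γ (fun _ => 0) l
            (Function.update τ j ⊤) i u)) /
      (∫ u in (0:ℝ)..t,
        (clusterHazard n β₁ β₂ θ₁ θ₂ α γ (fun _ => 0) l
            (Function.update τ j (ENNReal.ofReal t''j)) i u
          - clusterHazard n β₁ β₂ θ₁ θ₂ α γ (fun _ => 0) l
            (Function.update τ j ⊤) i u))) := by
  have hC : 0 < Real.exp (β₁ * 0 + θ₁ * l i) * Real.exp (β₂ * 0 + θ₂ * l j) := by positivity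
  rw [integral_clusterHazard_update_sub_update_top β₁ β₂ θ₁ θ₂ α γ _ l τ hij ht'j_pos.le
      (by linarith),
    integral_clusterHazard_update_sub_update_top β₁ β₂ θ₁ θ₂ α γ _ l τ hij (by linarith)
      h''lt.le,
    mul_div_mul_left _ _ hC.ne']
  refine ⟨rfl, fun hγ_pos => ?_⟩
  have hden_pos : 0 < ∫ u in (0:ℝ)..(t - t''j), γ u :=
    intervalIntegral.intervalIntegral_pos_of_pos_on (hγ_int _ (by linarith))
      (fun s hs => hγ_pos s hs.1) (by linarith)
  exact (one_lt_div hden_pos).2 <|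
    intervalIntegral_lt_intervalIntegral_of_pos_on (hγ_int _ (by linarith))
      (hγ_int _ (by linarith)) (fun s hs => hγ_pos s (by linarith [hs.1])) (by linarith)

/-- Controlled contagion cumulative hazard ratio: with all treatments zero, contrasting
infection of `j` at the earlier time `t'_j` versus the later time `t''_j` (each against
`j` uninfected), the ratio of cumulative hazard increments up to `t` equals
`(∫₀^{t-t'_j} γ)/(∫₀^{t-t''_j} γ)`; in particular it exceeds `1` when `γ > 0` on
`(0,∞)`, so earlier exposure to infection increases cumulative infection risk. -/
theorem controlled_contagion_cumulative_hazard_ratio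
    (n : ℕ) (β₁ β₂ θ₁ θ₂ : ℝ) (α γ : ℝ → ℝ)
    (hγ_int : ∀ c : ℝ, 0 ≤ c → IntervalIntegrable γ volume 0 c)
    (l : Fin n → ℝ) (τ : Fin n → ℝ≥0∞)
    (hτ_pos : ∀ k, 0 < τ k)
    (i j : Fin n) (hij : i ≠ j)
    (t t'j t''j : ℝ) (ht'j_pos : 0 < t'j) (h'lt'' : t'j < t''j) (h''lt : t''j < t)
    (hden : (∫ u in (0:ℝ)..(t - t''j), γ u) ≠ 0) :
    (∫ u in (0:ℝ)..t,
        (clusterHazard n β₁ β₂ θ₁ θ₂ α γ (fun _ => 0) l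
            (Function.update τ j (ENNReal.ofReal t'j)) i u
          - clusterHazard n β₁ β₂ θ₁ θ₂ α γ (fun _ => 0) l
            (Function.update τ j ⊤) i u)) /
    (∫ u in (0:ℝ)..t,
        (clusterHazard n β₁ β₂ θ₁ θ₂ α γ (fun _ => 0) l
            (Function.update τ j (ENNReal.ofReal t''j)) i u
          - clusterHazard n β₁ β₂ θ₁ θ₂ α γ (fun _ => 0) l
            (Function.update τ j ⊤) i u))
      = (∫ u in (0:ℝ)..(t - t'j), γ u) / (∫ u in (0:ℝ)..(t - t''j), γ u) ∧
    ((∀ s : ℝ, 0 < s → 0 < γ s) →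
      1 < (∫ u in (0:ℝ)..t,
        (clusterHazard n β₁ β₂ θ₁ θ₂ α γ (fun _ => 0) l
            (Function.update τ j (ENNReal.ofReal t'j)) i u
          - clusterHazard n β₁ β₂ θ₁ θ₂ α γ (fun _ => 0) l
            (Function.update τ j ⊤) i u)) /
      (∫ u in (0:ℝ)..t,
        (clusterHazard n β₁ β₂ θ₁ θ₂ α γ (fun _ => 0) l
            (Function.update τ j (ENNReal.ofReal t''j)) i u
          - clusterHazard n β₁ β₂ θ₁ θ₂ α γ (fun _ => 0) l
            (Function.update τ j ⊤) i u))) :=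
  controlled_contagion_cumulative_hazard_ratio_general n β₁ β₂ θ₁ θ₂ α γ hγ_int l τ i j hij t t'j
    t''j ht'j_pos h'lt'' h''lt
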